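/- arXiv:1804.00779 — 3 statements merged into one kernel-verified Lean document; each statement's English description precedes it below -/
import Mathlib

section
/- Superimposed sigmoids universally approximate monotonic functions: Let S : [r_0, r_1] → [0,1] be continuous and strictly increasing with S(r_0) = 0, S(r_1) = 1. For any ε > 0, there exist a positive integer n, weights w_j > 0 with Σ w_j = 1, points b_j in [r_0, r_1], and bounded positive scale parameters τ_j such that |Σ_{j=1}^n w_j σ((x - b_j)/τ_j) - S(x)| < ε for all x in (r_0, r_1), where σ is the logistic sigmoid. -/
/-!
Place the `n` points `b j` at the quantiles `S (b j) = (j + 1/2) / n` and give each sigmoid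
weight `1/n` and the same small width `τ`. The uniform step mixture `#{j | b j < x} / n` is then
within `1/(2n)` of `S x`. Each sigmoid differs from its step by at most `exp (-|x - b j| / τ)`;
as the `b j` are `δ`-separated, at most one of them is within `δ/2` of `x`, so the total
error of the sigmoid mixture against the step mixture is at most `1/n + exp (-δ / (2τ))`.
-/

noncomputable def logisticSigmoid (z : ℝ) : ℝ := 1 / (1 + Real.exp (-z))

open Real Finset Filter Topology

lemma logisticSigmoid_eq_sigmoid : logisticSigmoid = sigmoid := by
  funext z
  exact one_div _

namespace Real

lemma sigmoid_le_exp (x : ℝ) : sigmoid x ≤ exp x := by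
  have h : sigmoid x * exp (-x) ≤ 1 := sigmoid_mul_rexp_neg x ▸ sigmoid_le_one _
  rwa [exp_neg, ← div_eq_mul_inv, div_le_one (exp_pos x)] at h

lemma abs_sigmoid_sub_indicator_le (x : ℝ) :
    |sigmoid x - if 0 < x then 1 else 0| ≤ exp (-|x|) := by
  split_ifs with hx
  · rw [abs_sub_comm, abs_of_pos (sub_pos.2 (sigmoid_lt_one x)), ← sigmoid_neg, abs_of_pos hx]
    exact sigmoid_le_exp _
  · rw [sub_zero, abs_of_pos (sigmoid_pos x), abs_of_nonpos (not_lt.1 hx), neg_neg]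
    exact sigmoid_le_exp x

lemma exp_neg_le_inv {u : ℝ} (hu : 0 < u) : exp (-u) ≤ u⁻¹ := by
  rw [exp_neg]
  exact inv_anti₀ hu (by linarith [add_one_le_exp u])

end Real

lemma exists_pos_forall_le_dist_of_injective {ι α : Type*} [Finite ι] [MetricSpace α]
    {b : ι → α} (hb : Function.Injective b) :
    ∃ δ > 0, ∀ i j, i ≠ j → δ ≤ dist (b i) (b j) := by
  have h : ∀ᶠ δ in 𝓝[>] (0 : ℝ), 0 < δ ∧ ∀ i j, i ≠ j → δ ≤ dist (b i) (b j) := by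
    refine eventually_mem_nhdsWithin.and (eventually_all.2 fun i => eventually_all.2 fun j => ?_)
    by_cases hij : i = j
    · exact Eventually.of_forall fun _ h => absurd hij h
    · filter_upwards [nhdsWithin_le_nhds (gt_mem_nhds (dist_pos.2 (hb.ne hij)))]
        with δ hδ _ using hδ.le
  exact h.exists

lemma abs_sum_sigmoid_sub_card_lt_le {ι : Type*} [Fintype ι] {b : ι → ℝ} {δ τ : ℝ}
    (hτ : 0 < τ) (hsep : ∀ i j, i ≠ j → δ ≤ dist (b i) (b j)) (x : ℝ) :
    |∑ j, sigmoid ((x - b j) / τ) - #{j | b j < x}|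
      ≤ Fintype.card ι * exp (-(δ / (2 * τ))) + 1 := by
  have hnear : #{j | dist x (b j) < δ / 2} ≤ 1 := Finset.card_le_one.2 fun i hi j hj => by
    by_contra hij
    simp only [mem_filter, Finset.mem_univ, true_and] at hi hj
    linarith [hsep i j hij, dist_triangle_left (b i) (b j) x]
  have hterm : ∀ j, |sigmoid ((x - b j) / τ) - if b j < x then 1 else 0|
      ≤ exp (-(δ / (2 * τ))) + if dist x (b j) < δ / 2 then 1 else 0 := by
    intro j
    have h := abs_sigmoid_sub_indicator_le ((x - b j) / τ)
    simp only [div_pos_iff_of_pos_right hτ, sub_pos, abs_div, abs_of_pos hτ, ← Real.dist_eq] at h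
    refine h.trans ?_
    split_ifs with hj
    · have : exp (-(dist x (b j) / τ)) ≤ 1 := exp_le_one_iff.2 (neg_nonpos.2 (by positivity))
      linarith [exp_pos (-(δ / (2 * τ)))]
    · rw [add_zero, exp_le_exp, neg_le_neg_iff, ← div_div]
      exact div_le_div_of_nonneg_right (not_lt.1 hj) hτ.le
  calc |∑ j, sigmoid ((x - b j) / τ) - #{j | b j < x}|
      = |∑ j, (sigmoid ((x - b j) / τ) - if b j < x then 1 else 0)| := by
        rw [sum_sub_distrib, sum_boole]
    _ ≤ ∑ j, |sigmoid ((x - b j) / τ) - if b j < x then 1 else 0| := abs_sum_le_sum_abs _ _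
    _ ≤ ∑ j, (exp (-(δ / (2 * τ))) + if dist x (b j) < δ / 2 then 1 else 0) :=
        sum_le_sum fun j _ => hterm j
    _ = Fintype.card ι * exp (-(δ / (2 * τ))) + #{j | dist x (b j) < δ / 2} := by
        rw [sum_add_distrib, sum_const, sum_boole, card_univ, nsmul_eq_mul]
    _ ≤ Fintype.card ι * exp (-(δ / (2 * τ))) + 1 := by
        gcongr
        exact_mod_cast hnear

lemma abs_card_add_half_lt_sub_le {n : ℕ} {t : ℝ} (ht0 : 0 ≤ t) (htn : t ≤ n) :
    |(#{j : Fin n | (j : ℝ) + 1 / 2 < t} : ℝ) - t| ≤ 1 / 2 := by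
  have hfilter : ({j : Fin n | (j : ℝ) + 1 / 2 < t} : Finset (Fin n))
      = ({j : Fin n | (j : ℕ) < ⌈t - 1 / 2⌉₊} : Finset (Fin n)) := by
    ext j
    simp [Nat.lt_ceil, lt_sub_iff_add_lt]
  have hceil_le : (⌈t - 1 / 2⌉₊ : ℝ) ≤ t + 1 / 2 := by
    rcases le_or_gt (t - 1 / 2) 0 with h | h
    · rw [Nat.ceil_eq_zero.2 h]
      push_cast
      linarith
    · linarith [Nat.ceil_lt_add_one h.le]
  rw [hfilter, Fin.card_filter_val_lt, Nat.cast_min, abs_le]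
  constructor
  · linarith [le_min (by linarith : t - 1 / 2 ≤ n) (Nat.le_ceil (t - 1 / 2))]
  · linarith [min_le_right (n : ℝ) ⌈t - 1 / 2⌉₊]

lemma add_half_div_mem_Icc {n : ℕ} (j : Fin n) : ((j : ℝ) + 1 / 2) / n ∈ Set.Icc (0 : ℝ) 1 := by
  have hj : (j : ℝ) + 1 ≤ n := by exact_mod_cast j.2
  exact ⟨by positivity, div_le_one_of_le₀ (by linarith) (Nat.cast_nonneg n)⟩

lemma add_half_div_injective {n : ℕ} (hn : 0 < n) :
    Function.Injective fun j : Fin n => ((j : ℝ) + 1 / 2) / n := fun i j hij => by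
  rw [div_left_inj' (by positivity), add_left_inj] at hij
  exact Fin.ext (by exact_mod_cast hij)

lemma abs_sum_sigmoid_quantiles_sub_le {S : ℝ → ℝ} {s : Set ℝ} (hS : StrictMonoOn S s)
    {n : ℕ} (hn : 0 < n) {b : Fin n → ℝ} (hb : ∀ j, b j ∈ s)
    (hSb : ∀ j, S (b j) = ((j : ℝ) + 1 / 2) / n) {δ τ : ℝ} (hτ : 0 < τ)
    (hsep : ∀ i j, i ≠ j → δ ≤ dist (b i) (b j)) {x : ℝ} (hx : x ∈ s)
    (hSx : S x ∈ Set.Icc 0 1) :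
    |∑ j, 1 / n * sigmoid ((x - b j) / τ) - S x| ≤ exp (-(δ / (2 * τ))) + 3 / (2 * n) := by
  have hnR : (0 : ℝ) < n := by exact_mod_cast hn
  set c := #{j | b j < x}
  have hsig := abs_sum_sigmoid_sub_card_lt_le hτ hsep x
  rw [Fintype.card_fin] at hsig
  have hc : |(c : ℝ) - n * S x| ≤ 1 / 2 := by
    have hcount : c = #{j : Fin n | (j : ℝ) + 1 / 2 < n * S x} := by
      refine congrArg card (filter_congr fun j _ => ?_)
      rw [← hS.lt_iff_lt (hb j) hx, hSb j, div_lt_iff₀' hnR]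
    rw [hcount]
    exact abs_card_add_half_lt_sub_le (by nlinarith [hSx.1]) (by nlinarith [hSx.2])
  have hsplit : ∑ j, 1 / n * sigmoid ((x - b j) / τ) - S x
      = ((∑ j, sigmoid ((x - b j) / τ) - c) + (c - n * S x)) / n := by
    rw [← mul_sum]
    field_simp
    ring
  rw [hsplit, abs_div, abs_of_pos hnR, div_le_iff₀ hnR]
  calc |(∑ j, sigmoid ((x - b j) / τ) - c) + (c - n * S x)|
      ≤ |∑ j, sigmoid ((x - b j) / τ) - c| + |(c : ℝ) - n * S x| := abs_add_le _ _
    _ ≤ (n * exp (-(δ / (2 * τ))) + 1) + 1 / 2 := add_le_add hsig hc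
    _ = (exp (-(δ / (2 * τ))) + 3 / (2 * n)) * n := by field_simp; ring

/-- Superimposed sigmoids universally approximate continuous strictly increasing
CDF-like functions on an interval. -/
theorem stmt_3 (r0 r1 : ℝ) (hr : r0 < r1) (S : ℝ → ℝ)
    (hScont : ContinuousOn S (Set.Icc r0 r1))
    (hSmono : StrictMonoOn S (Set.Icc r0 r1))
    (hS0 : S r0 = 0) (hS1 : S r1 = 1)
    (ε : ℝ) (hε : 0 < ε) :
    ∃ (n : ℕ), 0 < n ∧ ∃ (w b τ : Fin n → ℝ),
      (∀ j, 0 < w j) ∧ (∑ j, w j = 1) ∧ (∀ j, b j ∈ Set.Icc r0 r1) ∧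
      (∀ j, 0 < τ j) ∧ (∃ B : ℝ, ∀ j, τ j ≤ B) ∧
      ∀ x ∈ Set.Ioo r0 r1,
        |(∑ j, w j * logisticSigmoid ((x - b j) / τ j)) - S x| < ε := by
  obtain ⟨n, hn⟩ := exists_nat_gt (3 / ε)
  have hnR : (0 : ℝ) < n := (div_pos three_pos hε).trans hn
  have hn0 : 0 < n := by exact_mod_cast hnR
  have hquantile : ∀ j : Fin n, ∃ t ∈ Set.Icc r0 r1, S t = ((j : ℝ) + 1 / 2) / n := fun j =>
    intermediate_value_Icc hr.le hScont (by rw [hS0, hS1]; exact add_half_div_mem_Icc j)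
  choose b hbI hSb using hquantile
  have hb_inj : Function.Injective b :=
    Function.Injective.of_comp (f := S) <|
      (show S ∘ b = _ from funext hSb) ▸ add_half_div_injective hn0
  obtain ⟨δ, hδ, hsep⟩ := exists_pos_forall_le_dist_of_injective hb_inj
  set τ := δ * ε / 8
  have hτ : 0 < τ := by positivity
  have hexp : exp (-(δ / (2 * τ))) ≤ ε / 4 := by
    calc exp (-(δ / (2 * τ))) ≤ (δ / (2 * τ))⁻¹ := exp_neg_le_inv (by positivity)
      _ = ε / 4 := by simp only [τ]; field_simp; ring
  refine ⟨n, hn0, fun _ => 1 / n, b, fun _ => τ, fun _ => by positivity, ?_, hbI,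
    fun _ => hτ, ⟨τ, fun _ => le_rfl⟩, fun x hx => ?_⟩
  · rw [sum_const, card_univ, Fintype.card_fin, nsmul_eq_mul, mul_one_div_cancel hnR.ne']
  have hxI : x ∈ Set.Icc r0 r1 := Set.Ioo_subset_Icc_self hx
  have hSx : S x ∈ Set.Icc 0 1 := hS0 ▸ hS1 ▸ hSmono.monotoneOn.mapsTo_Icc hxI
  have h3n : 3 / (2 * n) < ε / 2 := by
    rw [div_lt_iff₀ hε] at hn
    rw [div_lt_iff₀ (by positivity)]
    linarith
  rw [logisticSigmoid_eq_sigmoid]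
  linarith [abs_sum_sigmoid_quantiles_sub_le hSmono hn0 hbI hSb hτ hsep hxI hSx]
end

section
/- The pre-logit deep sigmoidal flow x ↦ Σ_{j=1}^n w_j σ((x - b_j)/τ_j) with w_j > 0, τ_j > 0 is strictly increasing, smooth, and maps ℝ bijectively onto the open interval (0, Σ_j w_j); consequently x ↦ σ^{-1}(Σ_j w_j σ(a_j x + b_j)) with Σ w_j = 1, w_j > 0, a_j > 0, is a strictly increasing bijection of ℝ onto ℝ. -/
noncomputable def logit (y : ℝ) : ℝ := Real.log (y / (1 - y))

open Filter Set Topology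

lemma denom_pos (z : ℝ) : 0 < 1 + Real.exp (-z) := by positivity

lemma sig_pos (z : ℝ) : 0 < logisticSigmoid z := by
  unfold logisticSigmoid; positivity

lemma sig_lt_one (z : ℝ) : logisticSigmoid z < 1 := by
  unfold logisticSigmoid
  rw [div_lt_one (denom_pos z)]
  linarith [Real.exp_pos (-z)]

lemma sig_strictMono : StrictMono logisticSigmoid := by
  intro x y h
  unfold logisticSigmoid
  apply one_div_lt_one_div_of_lt (denom_pos y)
  have := Real.exp_lt_exp.2 (neg_lt_neg h)
  linarith

lemma sig_contDiff : ContDiff ℝ (⊤ : ℕ∞) logisticSigmoid := by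
  apply ContDiff.div contDiff_const
  · exact contDiff_const.add (Real.contDiff_exp.comp contDiff_id.neg)
  · exact fun z => ne_of_gt (denom_pos z)

lemma sig_continuous : Continuous logisticSigmoid := sig_contDiff.continuous

lemma sig_tendsto_bot : Tendsto logisticSigmoid atBot (𝓝 0) := by
  have h : Tendsto (fun z : ℝ => 1 + Real.exp (-z)) atBot atTop := by
    apply tendsto_atTop_add_const_left
    exact Real.tendsto_exp_atTop.comp tendsto_neg_atBot_atTop
  have h2 := h.inv_tendsto_atTop
  simp only [Pi.inv_def] at h2
  unfold logisticSigmoid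
  simpa [one_div] using h2

lemma sig_tendsto_top : Tendsto logisticSigmoid atTop (𝓝 1) := by
  have h : Tendsto (fun z : ℝ => 1 + Real.exp (-z)) atTop (𝓝 1) := by
    have : Tendsto (fun z : ℝ => Real.exp (-z)) atTop (𝓝 0) :=
      Real.tendsto_exp_atBot.comp tendsto_neg_atTop_atBot
    simpa using tendsto_const_nhds.add this
  have := (tendsto_const_nhds (x := (1:ℝ))).div h one_ne_zero
  unfold logisticSigmoid
  simpa [Pi.div_def] using this

lemma logit_sig (z : ℝ) : logit (logisticSigmoid z) = z := by
  unfold logit logisticSigmoid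
  have he := Real.exp_pos (-z)
  have hd := denom_pos z
  have hz := Real.exp_pos z
  have : 1 / (1 + Real.exp (-z)) / (1 - 1 / (1 + Real.exp (-z))) = Real.exp z := by
    rw [Real.exp_neg z]
    field_simp
    ring
  rw [this, Real.log_exp]

lemma main_lemma (n : ℕ) (hn : 0 < n) (w : Fin n → ℝ) (hw : ∀ j, 0 < w j)
    (l : Fin n → ℝ → ℝ) (hmono : ∀ j, StrictMono (l j))
    (hc : ∀ j, Continuous (l j))
    (hbot : ∀ j, Tendsto (l j) atBot atBot) (htop : ∀ j, Tendsto (l j) atTop atTop) :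
    StrictMono (fun x => ∑ j, w j * logisticSigmoid (l j x)) ∧
    Set.BijOn (fun x => ∑ j, w j * logisticSigmoid (l j x)) Set.univ (Set.Ioo 0 (∑ j, w j)) := by
  have hne : (Finset.univ : Finset (Fin n)).Nonempty := Finset.univ_nonempty_iff.2 ⟨⟨0, hn⟩⟩
  set f := fun x => ∑ j, w j * logisticSigmoid (l j x) with hf
  have hsm : StrictMono f := by
    intro x y hxy
    apply Finset.sum_lt_sum_of_nonempty hne
    intro j _
    exact mul_lt_mul_of_pos_left (sig_strictMono (hmono j hxy)) (hw j)
  have hcont : Continuous f := by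
    apply continuous_finset_sum
    intro j _
    exact continuous_const.mul (sig_continuous.comp (hc j))
  have htb : Tendsto f atBot (𝓝 0) := by
    have : Tendsto f atBot (𝓝 (∑ j : Fin n, w j * 0)) := by
      apply tendsto_finset_sum
      intro j _
      exact (sig_tendsto_bot.comp (hbot j)).const_mul (w j)
    simpa using this
  have htt : Tendsto f atTop (𝓝 (∑ j, w j)) := by
    have : Tendsto f atTop (𝓝 (∑ j : Fin n, w j * 1)) := by
      apply tendsto_finset_sum
      intro j _
      exact (sig_tendsto_top.comp (htop j)).const_mul (w j)
    simpa using this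
  refine ⟨hsm, ?_, fun x _ y _ h => hsm.injective h, ?_⟩
  · intro x _
    constructor
    · apply Finset.sum_pos (fun j _ => mul_pos (hw j) (sig_pos _)) hne
    · apply Finset.sum_lt_sum_of_nonempty hne
      intro j _
      nth_rewrite 2 [← mul_one (w j)]
      exact mul_lt_mul_of_pos_left (sig_lt_one _) (hw j)
  · intro y hy
    have := isPreconnected_univ.intermediate_value_Ioo (l₁ := atBot) (l₂ := atTop)
      (le_principal_iff.2 univ_mem) (le_principal_iff.2 univ_mem)
      hcont.continuousOn htb htt
    exact this hy

lemma logit_strictMonoOn : StrictMonoOn logit (Set.Ioo (0:ℝ) 1) := by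
  intro x hx y hy hxy
  unfold logit
  apply Real.log_lt_log
  · exact div_pos hx.1 (by linarith [hx.2])
  · rw [div_lt_div_iff₀ (by linarith [hx.2]) (by linarith [hy.2])]
    nlinarith [hx.1, hy.2]

/-- The pre-logit DSF is a strictly increasing smooth bijection of ℝ onto
`(0, Σ w_j)`; with convex weights, the logit of a DSF is a strictly increasing
bijection of ℝ onto ℝ. -/
theorem stmt_8 (n : ℕ) (hn : 0 < n) (w b τ a : Fin n → ℝ)
    (hw : ∀ j, 0 < w j) (hτ : ∀ j, 0 < τ j)
    (hsum : ∑ j, w j = 1) (ha : ∀ j, 0 < a j) :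
    (StrictMono (fun x : ℝ => ∑ j, w j * logisticSigmoid ((x - b j) / τ j)) ∧
      ContDiff ℝ (⊤ : ℕ∞) (fun x : ℝ => ∑ j, w j * logisticSigmoid ((x - b j) / τ j)) ∧
      Set.BijOn (fun x : ℝ => ∑ j, w j * logisticSigmoid ((x - b j) / τ j))
        Set.univ (Set.Ioo 0 (∑ j, w j))) ∧
    (StrictMono (fun x : ℝ => logit (∑ j, w j * logisticSigmoid (a j * x + b j))) ∧
      Function.Bijective
        (fun x : ℝ => logit (∑ j, w j * logisticSigmoid (a j * x + b j)))) := by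
  have h1 := main_lemma n hn w hw (fun j x => (x - b j) / τ j)
    (fun j => fun x y hxy => (div_lt_div_iff_of_pos_right (hτ j)).2 (sub_lt_sub_right hxy _))
    (fun j => (continuous_id.sub continuous_const).div_const _)
    (fun j => (tendsto_atBot_add_const_right _ _ tendsto_id).atBot_div_const (hτ j))
    (fun j => (tendsto_atTop_add_const_right _ _ tendsto_id).atTop_div_const (hτ j))
  have h2 := main_lemma n hn w hw (fun j x => a j * x + b j)
    (fun j => fun x y hxy => by
      show a j * x + b j < a j * y + b j
      have := mul_lt_mul_of_pos_left hxy (ha j); linarith)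
    (fun j => (continuous_const.mul continuous_id).add continuous_const)
    (fun j => tendsto_atBot_add_const_right _ _
      ((tendsto_const_mul_atBot_of_pos (ha j)).2 tendsto_id))
    (fun j => tendsto_atTop_add_const_right _ _
      ((tendsto_const_mul_atTop_of_pos (ha j)).2 tendsto_id))
  rw [hsum] at h2
  obtain ⟨hsm2, hbij2⟩ := h2
  set f2 := fun x : ℝ => ∑ j, w j * logisticSigmoid (a j * x + b j) with hf2
  have hmem : ∀ x, f2 x ∈ Set.Ioo (0:ℝ) 1 := fun x => hbij2.mapsTo (Set.mem_univ x)
  have hg : StrictMono (fun x => logit (f2 x)) := fun x y hxy =>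
    logit_strictMonoOn (hmem x) (hmem y) (hsm2 hxy)
  refine ⟨⟨h1.1, ?_, h1.2⟩, hg, hg.injective, ?_⟩
  · apply ContDiff.sum
    intro j _
    exact contDiff_const.mul (sig_contDiff.comp
      ((contDiff_id.sub contDiff_const).div_const _))
  · intro y
    obtain ⟨x, -, hx⟩ := hbij2.surjOn ⟨sig_pos y, sig_lt_one y⟩
    refine ⟨x, ?_⟩
    show logit (f2 x) = y
    rw [hx, logit_sig]
end

section
/- Probability integral transform for triangular maps (Hyvärinen–Pajunen): if X is a random vector in ℝ^m with strictly positive continuous density, and F is the triangular map with F_t(x_{1:t}) = P(X_t ≤ x_t | X_{1:t-1} = x_{1:t-1}) (the conditional CDFs), then F(X) is uniformly distributed on the cube (0,1)^m with independent coordinates. -/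
/-!
Induct on the dimension, splitting off the first coordinate. The first component of the map `F`
is the CDF of the normalised marginal law of `X₀`, which is continuous and strictly increasing
because that law has a positive density; so it pushes the marginal law to the uniform law on
`(0,1)`. The remaining components form the same map for the conditional density `p (x₀, ·)`,
which by induction pushes every fibre to the uniform law on the cube of one dimension less,
whatever `x₀` is. A skew product `(a, b) ↦ (G a, H a b)` whose fibre maps all produce the same
law pushes the joint law to a product law, here the uniform law on the whole cube.
-/

open MeasureTheory Set Filter ProbabilityTheory
open scoped ENNReal

namespace ProbabilityTheory

variable {ρ : Measure ℝ}

lemma continuous_cdf [IsProbabilityMeasure ρ] [NullSingletonClass ρ] : Continuous (cdf ρ) := by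
  refine continuous_iff_continuousAt.2 fun a => ?_
  have hleft : Function.leftLim (cdf ρ) a = cdf ρ a := by
    have hjump := (cdf ρ).measure_singleton a
    rw [measure_cdf, measure_singleton, eq_comm, ENNReal.ofReal_eq_zero, sub_nonpos] at hjump
    exact le_antisymm ((monotone_cdf ρ).leftLim_le le_rfl) hjump
  rw [continuousAt_iff_continuous_left_right, ← continuousWithinAt_Iio_iff_Iic,
    (monotone_cdf ρ).continuousWithinAt_Iio_iff_leftLim_eq]
  exact ⟨hleft, (cdf ρ).right_continuous a⟩

lemma strictMono_cdf [IsProbabilityMeasure ρ] (h : volume ≪ ρ) : StrictMono (cdf ρ) := by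
  intro a b hab
  have hpos : ρ (Ioc a b) ≠ 0 := fun h0 => hab.not_ge (by simpa using h h0)
  rwa [← measure_cdf ρ, StieltjesFunction.measure_Ioc, ne_eq, ENNReal.ofReal_eq_zero,
    not_le, sub_pos] at hpos

theorem map_cdf_eq_restrict_Ioo [IsProbabilityMeasure ρ] (hc : Continuous (cdf ρ))
    (hs : StrictMono (cdf ρ)) :
    ρ.map (cdf ρ) = volume.restrict (Ioo 0 1) := by
  have hmem : ∀ x, cdf ρ x ∈ Ioo 0 1 := fun x =>
    ⟨(cdf_nonneg ρ _).trans_lt (hs (sub_one_lt x)), (hs (lt_add_one x)).trans_le (cdf_le_one ρ _)⟩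
  have hsurj : ∀ a ∈ Ioo (0 : ℝ) 1, ∃ x, cdf ρ x = a := fun a ha => by
    obtain ⟨x₁, hx₁⟩ := ((tendsto_cdf_atBot ρ).eventually_lt_const ha.1).exists
    obtain ⟨x₂, hx₂⟩ := ((tendsto_cdf_atTop ρ).eventually_const_lt ha.2).exists
    exact intermediate_value_univ x₁ x₂ hc ⟨hx₁.le, hx₂.le⟩
  have := Measure.isProbabilityMeasure_map (μ := ρ) hc.aemeasurable
  refine Measure.ext_of_Iic _ _ fun a => ?_
  rw [Measure.map_apply hc.measurable measurableSet_Iic, Measure.restrict_apply measurableSet_Iic]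
  rcases le_or_gt a 0 with ha0 | ha0
  · have h₁ : cdf ρ ⁻¹' Iic a = ∅ :=
      eq_empty_of_forall_notMem fun x hx => (ha0.trans_lt (hmem x).1).not_ge hx
    have h₂ : Iic a ∩ Ioo 0 1 = ∅ :=
      eq_empty_of_forall_notMem fun x hx => (hx.1.trans ha0).not_gt hx.2.1
    simp [h₁, h₂]
  rcases le_or_gt 1 a with ha1 | ha1
  · have h₁ : cdf ρ ⁻¹' Iic a = univ := eq_univ_of_forall fun x => (hmem x).2.le.trans ha1
    have h₂ : Iic a ∩ Ioo 0 1 = Ioo 0 1 := inter_eq_right.2 fun x hx => hx.2.le.trans ha1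
    simp [h₁, h₂]
  obtain ⟨x, rfl⟩ := hsurj a ⟨ha0, ha1⟩
  have h₁ : cdf ρ ⁻¹' Iic (cdf ρ x) = Iic x := ext fun y => hs.le_iff_le
  have h₂ : Iic (cdf ρ x) ∩ Ioo 0 1 = Ioc 0 (cdf ρ x) := by
    ext y
    simp only [mem_inter_iff, mem_Iic, mem_Ioo, mem_Ioc]
    exact ⟨fun h => ⟨h.2.1, h.1⟩, fun h => ⟨h.2, h.1, h.2.trans_lt ha1⟩⟩
  rw [h₁, h₂, Real.volume_Ioc, sub_zero, ofReal_cdf]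

lemma cdf_inv_smul_apply [IsFiniteMeasure ρ] [NeZero ρ] (x : ℝ) :
    cdf ((ρ univ)⁻¹ • ρ) x = (ρ (Iic x)).toReal / (ρ univ).toReal := by
  rw [cdf_eq_real, measureReal_def, Measure.smul_apply, smul_eq_mul, ENNReal.toReal_mul,
    ENNReal.toReal_inv, inv_mul_eq_div]

theorem map_cdf_inv_smul_eq [IsFiniteMeasure ρ] (h₁ : ρ ≪ volume) (h₂ : volume ≪ ρ) :
    ρ.map (cdf ((ρ univ)⁻¹ • ρ)) = ρ univ • volume.restrict (Ioo 0 1) := by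
  have : NeZero ρ := ⟨fun h0 => by simpa [h0] using @h₂ univ⟩
  set ρ' := (ρ univ)⁻¹ • ρ
  have hρ : ρ = ρ univ • ρ' := by
    rw [smul_smul, ENNReal.mul_inv_cancel (NeZero.ne' _).symm (measure_ne_top _ _), one_smul]
  have : NullSingletonClass ρ' :=
    ⟨fun x => (Measure.smul_absolutelyContinuous.trans h₁) (measure_singleton x)⟩
  have hs : StrictMono (cdf ρ') :=
    strictMono_cdf (h₂.smul_right (ENNReal.inv_ne_zero.2 (measure_ne_top _ _)))
  conv_lhs => rw [hρ]
  rw [Measure.map_smul, map_cdf_eq_restrict_Ioo continuous_cdf hs]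

end ProbabilityTheory

namespace MeasureTheory

variable {α β γ δ : Type*} [MeasurableSpace α] [MeasurableSpace β] [MeasurableSpace γ]
  [MeasurableSpace δ]

lemma lintegral_pos_of_forall_pos {μ : Measure α} [NeZero μ] {f : α → ℝ≥0∞}
    (hf : Measurable f) (h : ∀ x, 0 < f x) : 0 < ∫⁻ x, f x ∂μ := by
  refine pos_iff_ne_zero.2 fun h0 => ?_
  obtain ⟨x, hx⟩ := ((lintegral_eq_zero_iff hf).1 h0).exists
  exact (h x).ne' hx

lemma MeasurePreserving.map_withDensity {μ : Measure α} {ν : Measure β} {e : α ≃ᵐ β}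
    (he : MeasurePreserving e μ ν) (f : α → ℝ≥0∞) :
    (μ.withDensity f).map e = ν.withDensity fun b => f (e.symm b) := by
  ext s hs
  rw [Measure.map_apply e.measurable hs, withDensity_apply _ (e.measurable hs),
    withDensity_apply _ hs, ← he.setLIntegral_comp_preimage_emb e.measurableEmbedding]
  simp

lemma Measure.map_fst_withDensity_prod {μ : Measure α} {ν : Measure β} [SFinite μ] [SFinite ν]
    {q : α × β → ℝ≥0∞} (hq : Measurable q) :
    ((μ.prod ν).withDensity q).map Prod.fst = μ.withDensity fun a => ∫⁻ b, q (a, b) ∂ν := by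
  ext s hs
  rw [Measure.map_apply measurable_fst hs, withDensity_apply _ (measurable_fst hs),
    withDensity_apply _ hs, ← prod_univ, ← Measure.prod_restrict, Measure.restrict_univ,
    lintegral_prod _ hq.aemeasurable]

theorem Measure.map_withDensity_prod_skew {μ : Measure α} {ν : Measure β} [SFinite μ] [SFinite ν]
    {q : α × β → ℝ≥0∞} (hq : Measurable q) {G : α → γ} (hG : Measurable G) {H : α → β → δ}
    (hH : Measurable (Function.uncurry H)) {κ : Measure γ} [SigmaFinite κ] {η : Measure δ}
    [SigmaFinite η] (hGκ : (μ.withDensity fun a => ∫⁻ b, q (a, b) ∂ν).map G = κ)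
    (hHη : ∀ᵐ a ∂μ, (ν.withDensity fun b => q (a, b)).map (H a) = (∫⁻ b, q (a, b) ∂ν) • η) :
    ((μ.prod ν).withDensity q).map (fun z => (G z.1, H z.1 z.2)) = κ.prod η := by
  set Ψ : α × β → γ × δ := fun z => (G z.1, H z.1 z.2)
  have hΨ : Measurable Ψ := (hG.comp measurable_fst).prodMk hH
  refine (Measure.prod_eq fun s t hs ht => ?_).symm
  have hst : MeasurableSet (Ψ ⁻¹' s ×ˢ t) := hΨ (hs.prod ht)
  have hfibre : ∀ a, ∫⁻ b, (Ψ ⁻¹' s ×ˢ t).indicator q (a, b) ∂ν =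
      (G ⁻¹' s).indicator (fun a => (ν.withDensity fun b => q (a, b)) (H a ⁻¹' t)) a := by
    intro a
    by_cases ha : G a ∈ s
    · rw [indicator_of_mem (show a ∈ G ⁻¹' s from ha), withDensity_apply _ (hH.of_uncurry_left ht),
        ← lintegral_indicator (hH.of_uncurry_left ht)]
      congr with b
      by_cases hb : H a b ∈ t
      · rw [indicator_of_mem (show (a, b) ∈ Ψ ⁻¹' s ×ˢ t from ⟨ha, hb⟩),
          indicator_of_mem (show b ∈ H a ⁻¹' t from hb)]
      · rw [indicator_of_notMem (show (a, b) ∉ Ψ ⁻¹' s ×ˢ t from fun h => hb h.2),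
          indicator_of_notMem (show b ∉ H a ⁻¹' t from hb)]
    · simp [Ψ, indicator, ha]
  calc ((μ.prod ν).withDensity q).map Ψ (s ×ˢ t)
      = ∫⁻ a, (G ⁻¹' s).indicator
          (fun a => (ν.withDensity fun b => q (a, b)) (H a ⁻¹' t)) a ∂μ := by
        rw [Measure.map_apply hΨ (hs.prod ht), withDensity_apply _ hst,
          ← lintegral_indicator hst, lintegral_prod _ (hq.indicator hst).aemeasurable]
        exact lintegral_congr hfibre
    _ = ∫⁻ a, (G ⁻¹' s).indicator (fun a => (∫⁻ b, q (a, b) ∂ν) * η t) a ∂μ := by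
        refine lintegral_congr_ae ?_
        filter_upwards [hHη] with a ha
        by_cases haG : a ∈ G ⁻¹' s
        · rw [indicator_of_mem haG, indicator_of_mem haG,
            ← Measure.map_apply hH.of_uncurry_left ht, ha]
          rfl
        · rw [indicator_of_notMem haG, indicator_of_notMem haG]
    _ = κ s * η t := by
        rw [lintegral_indicator (hG hs), lintegral_mul_const _ hq.lintegral_prod_right',
          ← withDensity_apply _ (hG hs), ← Measure.map_apply hG hs, hGκ]

lemma integral_comp_equiv_pi {X ι κ : Type*} [MeasureSpace X] [SigmaFinite (volume : Measure X)]
    [Fintype ι] [Fintype κ] (σ : ι ≃ κ) {E : Type*} [NormedAddCommGroup E] [NormedSpace ℝ E]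
    (f : (κ → X) → E) :
    ∫ y : ι → X, f (fun k => y (σ.symm k)) = ∫ y : κ → X, f y := by
  rw [← (volume_measurePreserving_piCongrLeft (fun _ => X) σ).integral_comp' f]
  congr with y
  congr 1
  funext k
  rw [MeasurableEquiv.coe_piCongrLeft, Equiv.piCongrLeft_apply_eq_cast, cast_eq]

end MeasureTheory

section Fin

variable {n : ℕ} {α : Type*}

lemma MeasurableEquiv.piFinSuccAbove_zero_apply [MeasurableSpace α] (x : Fin (n + 1) → α) :
    MeasurableEquiv.piFinSuccAbove (fun _ => α) 0 x = (x 0, Fin.tail x) := by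
  simp [MeasurableEquiv.piFinSuccAbove_apply, Fin.insertNthEquiv, Fin.removeNth_zero]

lemma MeasurableEquiv.piFinSuccAbove_zero_symm_apply [MeasurableSpace α] (z : α × (Fin n → α)) :
    (MeasurableEquiv.piFinSuccAbove (fun _ => α) 0).symm z = Fin.cons z.1 z.2 := by
  simp [MeasurableEquiv.piFinSuccAbove_symm_apply, Fin.insertNthEquiv, Fin.insertNth_zero']

lemma measurable_fin_cons_uncurry [MeasurableSpace α] :
    Measurable fun z : α × (Fin n → α) => (Fin.cons z.1 z.2 : Fin (n + 1) → α) := by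
  have h := (MeasurableEquiv.piFinSuccAbove (fun _ => α) (0 : Fin (n + 1))).symm.measurable
  rwa [funext MeasurableEquiv.piFinSuccAbove_zero_symm_apply] at h

lemma map_piFinSuccAbove_symm_prod_pi [MeasurableSpace α] (μ : Measure α) [SigmaFinite μ] :
    (μ.prod (Measure.pi fun _ : Fin n => μ)).map
      (MeasurableEquiv.piFinSuccAbove (fun _ => α) 0).symm = Measure.pi fun _ => μ :=
  ((measurePreserving_piFinSuccAbove (fun _ : Fin (n + 1) => μ) 0).symm _).map_eq

variable [MeasureSpace α] [SigmaFinite (volume : Measure α)]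

lemma map_piFinSuccAbove_zero_withDensity (f : (Fin (n + 1) → α) → ℝ≥0∞) :
    (volume.withDensity f).map (MeasurableEquiv.piFinSuccAbove (fun _ => α) 0) =
      (volume : Measure (α × (Fin n → α))).withDensity fun z => f (Fin.cons z.1 z.2) := by
  simp only [(volume_preserving_piFinSuccAbove (fun _ => α) 0).map_withDensity,
    MeasurableEquiv.piFinSuccAbove_zero_symm_apply]

lemma map_eval_zero_withDensity {f : (Fin (n + 1) → α) → ℝ≥0∞} (hf : Measurable f) :
    (volume.withDensity f).map (fun x => x 0) =
      volume.withDensity fun a => ∫⁻ v, f (Fin.cons a v) := by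
  have hfst : (fun x : Fin (n + 1) → α => x 0) =
      Prod.fst ∘ MeasurableEquiv.piFinSuccAbove (fun _ => α) 0 := by
    funext x
    simp
  rw [hfst, ← Measure.map_map measurable_fst (MeasurableEquiv.measurable _),
    map_piFinSuccAbove_zero_withDensity, Measure.volume_eq_prod,
    Measure.map_fst_withDensity_prod (q := fun z => f (Fin.cons z.1 z.2))
      (hf.comp measurable_fin_cons_uncurry)]

def Fin.subtypeLeSuccEquiv (t : Fin n) :
    {s : Fin n // t ≤ s} ≃ {s : Fin (n + 1) // t.succ ≤ s} where
  toFun s := ⟨s.1.succ, Fin.succ_le_succ_iff.2 s.2⟩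
  invFun s := ⟨s.1.pred (fun h => Fin.succ_ne_zero t (Fin.le_zero_iff.1 (h ▸ s.2))),
    Fin.succ_le_succ_iff.1 (by simpa using s.2)⟩
  left_inv s := by simp
  right_inv s := by simp

end Fin

/-- The numerator integrates the density over the coordinates `s ≥ t` subject to `y t ≤ x t`
and the denominator without that constraint, so their ratio is the conditional CDF of the `t`-th
coordinate given the earlier ones. -/
noncomputable def rosenblatt (m : ℕ) (p : (Fin m → ℝ) → ℝ) (x : Fin m → ℝ) (t : Fin m) : ℝ :=
  (∫ y : {s : Fin m // t ≤ s} → ℝ,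
      if y ⟨t, le_refl t⟩ ≤ x t then p (fun s => if h : t ≤ s then y ⟨s, h⟩ else x s) else 0) /
  (∫ y : {s : Fin m // t ≤ s} → ℝ, p (fun s => if h : t ≤ s then y ⟨s, h⟩ else x s))

section Rosenblatt

variable {m n : ℕ}

lemma measurable_rosenblatt_uncurry {α : Type*} [MeasurableSpace α]
    {P : α × (Fin m → ℝ) → ℝ} (hP : Measurable P) :
    Measurable fun z : α × (Fin m → ℝ) => rosenblatt m (fun v => P (z.1, v)) z.2 := by
  refine measurable_pi_lambda _ fun t => ?_
  have hmerge : Measurable fun w : (α × (Fin m → ℝ)) × ({s // t ≤ s} → ℝ) =>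
      fun s => if h : t ≤ s then w.2 ⟨s, h⟩ else w.1.2 s := by
    refine measurable_pi_lambda _ fun s => ?_
    by_cases h : t ≤ s
    · simpa only [h, dif_pos] using measurable_snd.eval
    · simpa only [h, dif_neg, not_false_iff] using measurable_fst.snd.eval
  have hdens : Measurable fun w : (α × (Fin m → ℝ)) × ({s // t ≤ s} → ℝ) =>
      P (w.1.1, fun s => if h : t ≤ s then w.2 ⟨s, h⟩ else w.1.2 s) :=
    hP.comp (measurable_fst.fst.prodMk hmerge)
  have hcut : MeasurableSet {w : (α × (Fin m → ℝ)) × ({s // t ≤ s} → ℝ) |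
      w.2 ⟨t, le_rfl⟩ ≤ w.1.2 t} :=
    measurableSet_le measurable_snd.eval measurable_fst.snd.eval
  exact ((hdens.ite hcut measurable_const).stronglyMeasurable.integral_prod_right').measurable.div
    hdens.stronglyMeasurable.integral_prod_right'.measurable

lemma measurable_rosenblatt {p : (Fin m → ℝ) → ℝ} (hp : Measurable p) :
    Measurable (rosenblatt m p) :=
  (measurable_rosenblatt_uncurry (α := Unit) (hp.comp measurable_snd)).comp
    (measurable_prodMk_left (x := ()))

lemma rosenblatt_zero {p : (Fin (n + 1) → ℝ) → ℝ} (hp : Measurable p) (hp₀ : 0 ≤ p)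
    (x : Fin (n + 1) → ℝ) :
    rosenblatt (n + 1) p x 0 =
      ((volume.withDensity fun z => ENNReal.ofReal (p z)).map (fun z => z 0) (Iic (x 0))).toReal /
        ((volume.withDensity fun z => ENNReal.ofReal (p z)).map (fun z => z 0) univ).toReal := by
  have hreal : ∀ s, MeasurableSet s →
      ∫ z in s, p z = ((volume.withDensity fun z => ENNReal.ofReal (p z)) s).toReal :=
    fun s hs => by
      rw [withDensity_apply _ hs, integral_eq_lintegral_of_nonneg_ae (ae_of_all _ hp₀)
        hp.aestronglyMeasurable]
  have hval : Measurable fun z : Fin (n + 1) → ℝ => z 0 := measurable_pi_apply 0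
  unfold rosenblatt
  rw [Measure.map_apply hval measurableSet_Iic, Measure.map_apply hval MeasurableSet.univ,
    ← hreal _ (hval measurableSet_Iic), ← hreal _ (hval MeasurableSet.univ), preimage_univ,
    setIntegral_univ,
    ← integral_indicator (hval measurableSet_Iic),
    ← integral_comp_equiv_pi (Equiv.subtypeUnivEquiv (Fin.zero_le (n := n + 1))),
    ← integral_comp_equiv_pi (Equiv.subtypeUnivEquiv (Fin.zero_le (n := n + 1)))]
  simp [indicator]

lemma rosenblatt_succ (p : (Fin (n + 1) → ℝ) → ℝ) (x : Fin (n + 1) → ℝ) (t : Fin n) :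
    rosenblatt (n + 1) p x t.succ =
      rosenblatt n (fun v => p (Fin.cons (x 0) v)) (Fin.tail x) t := by
  have hmerge : ∀ y : {s : Fin n // t ≤ s} → ℝ,
      (fun s => if h : t.succ ≤ s then y ((Fin.subtypeLeSuccEquiv t).symm ⟨s, h⟩) else x s) =
        Fin.cons (x 0) (fun j => if h : t ≤ j then y ⟨j, h⟩ else Fin.tail x j) := by
    intro y
    funext s
    induction s using Fin.cases with
    | zero => simp
    | succ j => by_cases h : t ≤ j <;> simp [h, Fin.subtypeLeSuccEquiv, Fin.tail]
  unfold rosenblatt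
  rw [← integral_comp_equiv_pi (Fin.subtypeLeSuccEquiv t),
    ← integral_comp_equiv_pi (Fin.subtypeLeSuccEquiv t)]
  simp only [hmerge]
  rfl

end Rosenblatt

section Transform

variable {n : ℕ} {p : (Fin (n + 1) → ℝ) → ℝ}

noncomputable def headMarginal (p : (Fin (n + 1) → ℝ) → ℝ) : Measure ℝ :=
  volume.withDensity fun a => ∫⁻ v, ENNReal.ofReal (p (Fin.cons a v))

lemma measurable_ofReal_cons (hp : Measurable p) :
    Measurable fun z : ℝ × (Fin n → ℝ) => ENNReal.ofReal (p (Fin.cons z.1 z.2)) := by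
  fun_prop

lemma map_eval_zero_eq_headMarginal (hp : Measurable p) :
    (volume.withDensity fun x => ENNReal.ofReal (p x)).map (fun x => x 0) = headMarginal p :=
  map_eval_zero_withDensity (by fun_prop)

lemma headMarginal_univ (hp : Measurable p) :
    headMarginal p univ = ∫⁻ x, ENNReal.ofReal (p x) := by
  rw [← map_eval_zero_eq_headMarginal hp,
    Measure.map_apply (measurable_pi_apply 0) MeasurableSet.univ, preimage_univ,
    withDensity_apply _ MeasurableSet.univ, Measure.restrict_univ]

lemma isFiniteMeasure_headMarginal (hp : Measurable p) (hfin : ∫⁻ x, ENNReal.ofReal (p x) ≠ ∞) :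
    IsFiniteMeasure (headMarginal p) :=
  ⟨headMarginal_univ hp ▸ hfin.lt_top⟩

lemma absolutelyContinuous_headMarginal (hp : Measurable p) (hpos : ∀ x, 0 < p x) :
    volume ≪ headMarginal p :=
  withDensity_absolutelyContinuous' (measurable_ofReal_cons hp).lintegral_prod_right'.aemeasurable
    (ae_of_all _ fun _ =>
      (lintegral_pos_of_forall_pos (by fun_prop) fun _ => ENNReal.ofReal_pos.2 (hpos _)).ne')

lemma rosenblatt_succ_eq_comp (hp : Measurable p) (hpos : ∀ x, 0 < p x)
    (hfin : ∫⁻ x, ENNReal.ofReal (p x) ≠ ∞) :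
    rosenblatt (n + 1) p = (MeasurableEquiv.piFinSuccAbove (fun _ => ℝ) 0).symm ∘
      (fun z => (cdf ((headMarginal p univ)⁻¹ • headMarginal p) z.1,
        rosenblatt n (fun v => p (Fin.cons z.1 v)) z.2)) ∘
      MeasurableEquiv.piFinSuccAbove (fun _ => ℝ) 0 := by
  have := isFiniteMeasure_headMarginal hp hfin
  have hac := absolutelyContinuous_headMarginal hp hpos
  have : NeZero (headMarginal p) := ⟨fun h => by simpa [h] using @hac univ⟩
  funext x i
  simp only [Function.comp_apply, MeasurableEquiv.piFinSuccAbove_zero_apply,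
    MeasurableEquiv.piFinSuccAbove_zero_symm_apply]
  induction i using Fin.cases with
  | zero =>
    rw [Fin.cons_zero, rosenblatt_zero hp (fun x => (hpos x).le),
      map_eval_zero_eq_headMarginal hp, cdf_inv_smul_apply]
  | succ t => rw [Fin.cons_succ, rosenblatt_succ]

lemma map_withDensity_rosenblatt_succ (hp : Measurable p)
    (hpos : ∀ x, 0 < p x) (hfin : ∫⁻ x, ENNReal.ofReal (p x) ≠ ∞)
    (ih : ∀ p' : (Fin n → ℝ) → ℝ, Measurable p' → (∀ x, 0 < p' x) →
      ∫⁻ x, ENNReal.ofReal (p' x) ≠ ∞ →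
      (volume.withDensity fun x => ENNReal.ofReal (p' x)).map (rosenblatt n p') =
        (∫⁻ x, ENNReal.ofReal (p' x)) • Measure.pi fun _ => volume.restrict (Ioo (0 : ℝ) 1)) :
    (volume.withDensity fun x => ENNReal.ofReal (p x)).map (rosenblatt (n + 1) p) =
      (∫⁻ x, ENNReal.ofReal (p x)) • Measure.pi fun _ => volume.restrict (Ioo (0 : ℝ) 1) := by
  set ρ₀ := headMarginal p
  have := isFiniteMeasure_headMarginal hp hfin
  set G := cdf ((ρ₀ univ)⁻¹ • ρ₀)
  have hG : ρ₀.map G = ρ₀ univ • volume.restrict (Ioo 0 1) :=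
    map_cdf_inv_smul_eq (withDensity_absolutelyContinuous _ _)
      (absolutelyContinuous_headMarginal hp hpos)
  have : SigmaFinite (ρ₀ univ • volume.restrict (Ioo (0 : ℝ) 1)) := hG ▸ inferInstance
  set H : ℝ → (Fin n → ℝ) → Fin n → ℝ := fun a => rosenblatt n fun v => p (Fin.cons a v)
  have hH : ∀ᵐ a, (volume.withDensity fun v => ENNReal.ofReal (p (Fin.cons a v))).map (H a) =
      (∫⁻ v, ENNReal.ofReal (p (Fin.cons a v))) •
        Measure.pi fun _ => volume.restrict (Ioo (0 : ℝ) 1) := by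
    filter_upwards [ae_lt_top (measurable_ofReal_cons hp).lintegral_prod_right'
      (by simpa [ρ₀, headMarginal] using measure_ne_top ρ₀ univ)] with a ha
    exact ih _ (by fun_prop) (fun v => hpos _) ha.ne
  have hGm : Measurable G := (monotone_cdf _).measurable
  have hHm : Measurable (Function.uncurry H) :=
    measurable_rosenblatt_uncurry (P := fun z => p (Fin.cons z.1 z.2)) (by fun_prop)
  have hΨ : Measurable fun z : ℝ × (Fin n → ℝ) => (G z.1, H z.1 z.2) :=
    (hGm.comp measurable_fst).prodMk hHm
  set e := MeasurableEquiv.piFinSuccAbove (fun _ : Fin (n + 1) => ℝ) 0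
  calc (volume.withDensity fun x => ENNReal.ofReal (p x)).map (rosenblatt (n + 1) p)
      = (((volume.withDensity fun x => ENNReal.ofReal (p x)).map e).map
          fun z => (G z.1, H z.1 z.2)).map e.symm := by
        rw [Measure.map_map hΨ e.measurable,
          Measure.map_map e.symm.measurable (hΨ.comp e.measurable),
          rosenblatt_succ_eq_comp hp hpos hfin]
    _ = ((ρ₀ univ • volume.restrict (Ioo 0 1)).prod
          (Measure.pi fun _ => volume.restrict (Ioo (0 : ℝ) 1))).map e.symm := by
        rw [map_piFinSuccAbove_zero_withDensity, Measure.volume_eq_prod,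
          Measure.map_withDensity_prod_skew (measurable_ofReal_cons hp) hGm hHm hG hH]
    _ = _ := by
        rw [Measure.prod_smul_left, Measure.map_smul, map_piFinSuccAbove_symm_prod_pi,
          headMarginal_univ hp]

end Transform

theorem map_withDensity_rosenblatt (m : ℕ) {p : (Fin m → ℝ) → ℝ} (hp : Measurable p)
    (hpos : ∀ x, 0 < p x) (hfin : ∫⁻ x, ENNReal.ofReal (p x) ≠ ∞) :
    (volume.withDensity fun x => ENNReal.ofReal (p x)).map (rosenblatt m p) =
      (∫⁻ x, ENNReal.ofReal (p x)) • Measure.pi fun _ => volume.restrict (Ioo (0 : ℝ) 1) := by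
  induction m with
  | zero =>
    have hconst : rosenblatt 0 p = fun _ a => isEmptyElim a :=
      funext fun _ => Subsingleton.elim _ _
    rw [hconst, Measure.map_const, withDensity_apply _ MeasurableSet.univ, Measure.restrict_univ,
      Measure.pi_of_empty]
  | succ n ih => exact map_withDensity_rosenblatt_succ hp hpos hfin fun p' => ih

/-- Probability integral transform for triangular maps (Hyvärinen–Pajunen):
if `X` has a strictly positive continuous density `p` on ℝ^m and `F` is the
triangular map of conditional CDFs (expressed as ratios of integrals of the
joint density), then `F(X)` is uniformly distributed on the cube `(0,1)^m`. -/
theorem stmt_13 (m : ℕ) {Ω : Type*} [MeasurableSpace Ω]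
    (μ : Measure Ω) [IsProbabilityMeasure μ]
    (X : Ω → (Fin m → ℝ)) (hX : Measurable X)
    (p : (Fin m → ℝ) → ℝ) (hpcont : Continuous p) (hppos : ∀ x, 0 < p x)
    (hXlaw : μ.map X = volume.withDensity (fun x => ENNReal.ofReal (p x)))
    (F : (Fin m → ℝ) → (Fin m → ℝ))
    (hF : ∀ (t : Fin m) (x : Fin m → ℝ),
      F x t =
        (∫ y : {s : Fin m // t ≤ s} → ℝ,
            if y ⟨t, le_refl t⟩ ≤ x t then
              p (fun s => if h : t ≤ s then y ⟨s, h⟩ else x s) else 0) /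
        (∫ y : {s : Fin m // t ≤ s} → ℝ,
            p (fun s => if h : t ≤ s then y ⟨s, h⟩ else x s))) :
    μ.map (fun ω => F (X ω)) =
      volume.restrict (Set.univ.pi fun _ : Fin m => Set.Ioo (0 : ℝ) 1) := by
  have hF' : F = rosenblatt m p := funext fun x => funext fun t => hF t x
  have : IsProbabilityMeasure (μ.map X) := Measure.isProbabilityMeasure_map hX.aemeasurable
  have hmass : ∫⁻ x, ENNReal.ofReal (p x) = 1 := by
    simpa [hXlaw] using measure_univ (μ := μ.map X)
  rw [hF', ← Function.comp_def, ← Measure.map_map (measurable_rosenblatt hpcont.measurable) hX,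
    hXlaw, map_withDensity_rosenblatt m hpcont.measurable hppos (hmass ▸ ENNReal.one_ne_top),
    hmass, one_smul, ← Measure.restrict_pi_pi]
  rfl
end
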